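/- Let k ≥ 2, t ≥ 1, s = t−k+1, and ℓ = ⌊√(t+1+s²+s)⌋−(s+1) if t ≥ k−1 (ℓ = ⌊√(t+1)⌋−(s+1) otherwise). The configuration C(R_n, k, t) on the n-node ring, defined by v_i ∈ X_{k−1} if j = 0, v_i ∈ X_{ℓ+1−j} if 1 ≤ j ≤ ℓ+s+1, and v_i ∈ X_{j−ℓ−2s−2} if ℓ+s+2 ≤ j ≤ 2ℓ+2s+2, where j = i mod (2ℓ+2s+3), is a (k,t)-simple-monotone configuration, and hence a (k,t)-dynamo under the irreversible majority rule with λ = 1/2. -/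

import Mathlib

variable {V : Type*} [Fintype V]

/-- The degree of `v` in `G`. -/
noncomputable def deg (G : SimpleGraph V) (v : V) : ℕ := Nat.card {u | G.Adj v u}

/-- One synchronous round of the irreversible threshold-`lam` rule: a node increments
its weight iff at least `⌈lam · d(v)⌉` of its neighbors have strictly larger weight. -/
noncomputable def step (G : SimpleGraph V) (lam : ℝ) (c : V → ℕ) : V → ℕ :=
  fun v => if ⌈lam * (deg G v : ℝ)⌉₊ ≤ Nat.card {u | G.Adj v u ∧ c v < c u}
    then c v + 1 else c v

/-- A `(k,t)`-simple-monotone configuration (Definition 3 of the paper), encoded by a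
level function `X : V → ℤ` with values in `[-(t-k+1), k-1]`:  `X⁻¹(k-1) ≠ ∅`, the
initial weight of `v` is `max (X v) 0`, and every non-top node has at least
`⌈lam · d(v)⌉` neighbors of strictly higher level. -/
def SimpleMonotone (G : SimpleGraph V) (lam : ℝ) (k t : ℕ) (c : V → ℕ) : Prop :=
  ∃ X : V → ℤ,
    (∀ v, -((t : ℤ) - k + 1) ≤ X v ∧ X v ≤ (k : ℤ) - 1) ∧
    (∃ v, X v = (k : ℤ) - 1) ∧
    (∀ v, (c v : ℤ) = max (X v) 0) ∧
    (∀ v, X v < (k : ℤ) - 1 →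
      ⌈lam * (deg G v : ℝ)⌉₊ ≤ Nat.card {u | G.Adj v u ∧ X v < X u})

/-- The `n`-node ring on `ZMod n`. -/
def ringGraph (n : ℕ) : SimpleGraph (ZMod n) :=
  SimpleGraph.fromRel (fun a b => b = a + 1)

/-- The `n × m` torus on `ZMod n × ZMod m`. -/
def torusGraph (n m : ℕ) : SimpleGraph (ZMod n × ZMod m) :=
  SimpleGraph.fromRel (fun a b => (a.1 = b.1 ∧ b.2 = a.2 + 1) ∨ (a.2 = b.2 ∧ b.1 = a.1 + 1))

/-! ### Auxiliary lemmas -/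

lemma le_int_sqrt' {A b : ℤ} (hb : 0 ≤ b) (h1 : b ^ 2 ≤ A) : b ≤ Int.sqrt A := by
  have hA : 0 ≤ A := le_trans (by positivity) h1
  have h : b.toNat ≤ Nat.sqrt A.toNat := by
    rw [Nat.le_sqrt']
    zify
    rw [Int.toNat_of_nonneg hb, Int.toNat_of_nonneg hA]
    exact h1
  show b ≤ ((Nat.sqrt A.toNat : ℕ) : ℤ)
  omega

lemma int_sqrt_le' {A c : ℤ} (hA : 0 ≤ A) (hc : 0 ≤ c) (h2 : A < (c + 1) ^ 2) :
    Int.sqrt A ≤ c := by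
  have h : Nat.sqrt A.toNat < c.toNat + 1 := by
    rw [Nat.sqrt_lt']
    zify
    rw [Int.toNat_of_nonneg hA, Int.toNat_of_nonneg hc]
    exact h2
  show ((Nat.sqrt A.toNat : ℕ) : ℤ) ≤ c
  omega

lemma ringGraph_adj {n : ℕ} (a b : ZMod n) :
    (ringGraph n).Adj a b ↔ a ≠ b ∧ (b = a + 1 ∨ a = b + 1) := by
  simp [ringGraph, SimpleGraph.fromRel_adj]

lemma ring_one_ne_zero {n : ℕ} (hn : 3 ≤ n) : (1 : ZMod n) ≠ 0 := by
  intro h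
  have h1 : ((1 : ℕ) : ZMod n) = 0 := by exact_mod_cast h
  have h2 := (ZMod.natCast_eq_zero_iff 1 n).mp h1
  have := Nat.le_of_dvd one_pos h2
  omega

lemma ring_two_ne_zero {n : ℕ} (hn : 3 ≤ n) : (2 : ZMod n) ≠ 0 := by
  intro h
  have h1 : ((2 : ℕ) : ZMod n) = 0 := by exact_mod_cast h
  have h2 := (ZMod.natCast_eq_zero_iff 2 n).mp h1
  have := Nat.le_of_dvd two_pos h2
  omega

lemma ring_adj_sub_one {n : ℕ} (hn : 3 ≤ n) (v : ZMod n) : (ringGraph n).Adj v (v - 1) := by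
  rw [ringGraph_adj]
  refine ⟨fun h => ring_one_ne_zero hn (by linear_combination h), Or.inr (by ring)⟩

lemma ring_adj_add_one {n : ℕ} (hn : 3 ≤ n) (v : ZMod n) : (ringGraph n).Adj v (v + 1) := by
  rw [ringGraph_adj]
  refine ⟨fun h => ring_one_ne_zero hn (by linear_combination -h), Or.inl rfl⟩

lemma ring_neighbors {n : ℕ} (hn : 3 ≤ n) (v : ZMod n) :
    {u | (ringGraph n).Adj v u} = {v + 1, v - 1} := by
  ext u
  simp only [Set.mem_setOf_eq, ringGraph_adj, Set.mem_insert_iff, Set.mem_singleton_iff]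
  constructor
  · rintro ⟨hne, h | h⟩
    · exact Or.inl h
    · refine Or.inr ?_
      rw [h]; ring
  · rintro (h | h)
    · subst h; exact (ringGraph_adj v (v+1)).mp (ring_adj_add_one hn v)
    · subst h; exact (ringGraph_adj v (v-1)).mp (ring_adj_sub_one hn v)
      
lemma ring_deg {n : ℕ} [NeZero n] (hn : 3 ≤ n) (v : ZMod n) : deg (ringGraph n) v = 2 := by
  rw [deg, ring_neighbors hn, Nat.card_coe_set_eq]
  exact Set.ncard_pair (fun h => ring_two_ne_zero hn (by linear_combination h))

lemma half_deg_ceil {n : ℕ} [NeZero n] (hn : 3 ≤ n) (v : ZMod n) :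
    ⌈(1/2 : ℝ) * (deg (ringGraph n) v : ℝ)⌉₊ = 1 := by
  rw [ring_deg hn v]
  norm_num

lemma emod_sub_one {a P j : ℤ} (hP : 0 < P) (hj : a % P = j) (h1 : 1 ≤ j) :
    (a - 1) % P = j - 1 := by
  have h := Int.mul_ediv_add_emod a P
  have hlt : j < P := hj ▸ Int.emod_lt_of_pos a hP
  have ha : a - 1 = (j - 1) + P * (a / P) := by omega
  rw [ha, Int.add_mul_emod_self_left, Int.emod_eq_of_lt (by omega) (by omega)]

lemma emod_add_one {a P j : ℤ} (hP : 0 < P) (hj : a % P = j) (h1 : j + 1 < P) :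
    (a + 1) % P = j + 1 := by
  have h := Int.mul_ediv_add_emod a P
  have h0 : 0 ≤ j := hj ▸ Int.emod_nonneg a (by omega)
  have ha : a + 1 = (j + 1) + P * (a / P) := by omega
  rw [ha, Int.add_mul_emod_self_left, Int.emod_eq_of_lt (by omega) (by omega)]

lemma emod_add_one_top {a P : ℤ} (hP : 0 < P) (hj : a % P = P - 1) :
    (a + 1) % P = 0 := by
  have h := Int.mul_ediv_add_emod a P
  have ha : a + 1 = 0 + P * (a / P + 1) := by rw [mul_add, mul_one]; omega
  rw [ha, Int.add_mul_emod_self_left, Int.emod_eq_of_lt (by omega) (by omega)]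

lemma val_sub_one {n : ℕ} [NeZero n] (hn : 3 ≤ n) (v : ZMod n) (hv : v.val ≠ 0) :
    (v - 1).val = v.val - 1 := by
  haveI : Fact (1 < n) := ⟨by omega⟩
  have h1 : ((v - 1) + 1).val = ((v - 1).val + (1 : ZMod n).val) % n := ZMod.val_add _ _
  rw [sub_add_cancel, ZMod.val_one] at h1
  have h2 : (v - 1).val < n := ZMod.val_lt _
  have h3 : v.val < n := ZMod.val_lt _
  rcases Nat.lt_or_ge ((v - 1).val + 1) n with h | h
  · rw [Nat.mod_eq_of_lt h] at h1; omega
  · have : (v - 1).val + 1 = n := by omega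
    rw [this, Nat.mod_self] at h1
    omega

lemma val_add_one {n : ℕ} [NeZero n] (hn : 3 ≤ n) (v : ZMod n) :
    (v + 1).val = (v.val + 1) % n := by
  haveI : Fact (1 < n) := ⟨by omega⟩
  rw [ZMod.val_add, ZMod.val_one]

/-- Monotone lower-bound certificate lemma for the ring dynamics. -/
lemma lower_bound {n : ℕ} [NeZero n] (hn : 3 ≤ n) (c : ZMod n → ℕ) (L : ℕ → ZMod n → ℕ)
    (h0 : ∀ v, L 0 v ≤ c v)
    (hstep : ∀ r v, L (r + 1) v ≤ L r v ∨
      (L (r + 1) v ≤ L r v + 1 ∧ ∃ u, (ringGraph n).Adj v u ∧ L (r + 1) v ≤ L r u)) :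
    ∀ r v, L r v ≤ (step (ringGraph n) (1/2))^[r] c v := by
  intro r
  induction r with
  | zero => simpa using h0
  | succ r ih =>
    intro v
    rw [Function.iterate_succ_apply']
    set c' := (step (ringGraph n) (1/2))^[r] c with hc'
    have hmono : c' v ≤ step (ringGraph n) (1/2) c' v := by
      rw [step]; split <;> omega
    rcases hstep r v with h | ⟨h1, u, hadj, h2⟩
    · exact le_trans (le_trans h (ih v)) hmono
    · by_cases hcase : L (r + 1) v ≤ c' v
      · exact le_trans hcase hmono
      · push_neg at hcase
        have hlt : c' v < c' u := lt_of_lt_of_le (lt_of_lt_of_le hcase h2) (ih u)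
        have hcard : 1 ≤ Nat.card {u' | (ringGraph n).Adj v u' ∧ c' v < c' u'} := by
          haveI : Nonempty {u' | (ringGraph n).Adj v u' ∧ c' v < c' u'} := ⟨⟨u, hadj, hlt⟩⟩
          exact Nat.card_pos
        have hs : step (ringGraph n) (1/2) c' v = c' v + 1 := by
          rw [step, if_pos (by rw [half_deg_ceil hn v]; exact hcard)]
        have := ih v
        omega

lemma upper_bound {n : ℕ} [NeZero n] (hn : 3 ≤ n) (m : ℕ) (c : ZMod n → ℕ)
    (hc : ∀ v, c v ≤ m) : ∀ r v, (step (ringGraph n) (1/2))^[r] c v ≤ m := by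
  intro r
  induction r with
  | zero => simpa using hc
  | succ r ih =>
    intro v
    rw [Function.iterate_succ_apply']
    set c' := (step (ringGraph n) (1/2))^[r] c with hc'
    rw [step]
    split
    · rename_i hcond
      rw [half_deg_ceil hn v] at hcond
      have hne : Nonempty {u | (ringGraph n).Adj v u ∧ c' v < c' u} :=
        (Nat.card_pos_iff.mp (by omega)).1
      obtain ⟨⟨u, hadj, hlt⟩⟩ := hne
      have := ih u
      omega
    · exact ih v

/-- Distance (within a block) to the nearest peak. -/
def Dfun (ℓ s : ℤ) {n : ℕ} (v : ZMod n) : ℤ :=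
  if (v.val : ℤ) % (2*ℓ+2*s+3) ≤ ℓ+s+1 then (v.val : ℤ) % (2*ℓ+2*s+3)
  else 2*ℓ+2*s+3 - (v.val : ℤ) % (2*ℓ+2*s+3)

lemma Dfun_range {ℓ s : ℤ} (hℓs : 0 ≤ ℓ + s) {n : ℕ} (v : ZMod n) :
    0 ≤ Dfun ℓ s v ∧ Dfun ℓ s v ≤ ℓ + s + 1 := by
  have h1 : 0 ≤ (v.val : ℤ) % (2*ℓ+2*s+3) := Int.emod_nonneg _ (by omega)
  have h2 : (v.val : ℤ) % (2*ℓ+2*s+3) < 2*ℓ+2*s+3 := Int.emod_lt_of_pos _ (by omega)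
  unfold Dfun
  split <;> omega

lemma Dfun_neighbor {ℓ s : ℤ} (hℓs : 0 ≤ ℓ + s) {n : ℕ} [NeZero n] (hn : 3 ≤ n)
    (v : ZMod n) (hv : Dfun ℓ s v ≠ 0) :
    ∃ u, (ringGraph n).Adj v u ∧ (Dfun ℓ s u = 0 ∨ Dfun ℓ s u = Dfun ℓ s v - 1) := by
  have hP : (0:ℤ) < 2*ℓ+2*s+3 := by omega
  have h1 : 0 ≤ (v.val : ℤ) % (2*ℓ+2*s+3) := Int.emod_nonneg _ (by omega)
  have h2 : (v.val : ℤ) % (2*ℓ+2*s+3) < 2*ℓ+2*s+3 := Int.emod_lt_of_pos _ hP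
  by_cases hle : (v.val : ℤ) % (2*ℓ+2*s+3) ≤ ℓ + s + 1
  · -- descending side: use the left neighbour v - 1
    have hDv : Dfun ℓ s v = (v.val : ℤ) % (2*ℓ+2*s+3) := by unfold Dfun; rw [if_pos hle]
    have hj1 : 1 ≤ (v.val : ℤ) % (2*ℓ+2*s+3) := by rw [hDv] at hv; omega
    have hv0 : v.val ≠ 0 := by
      intro h
      rw [h] at hj1
      simp at hj1
    refine ⟨v - 1, ring_adj_sub_one hn v, Or.inr ?_⟩
    have hval : (v - 1).val = v.val - 1 := val_sub_one hn v hv0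
    have hcast : ((v - 1).val : ℤ) = (v.val : ℤ) - 1 := by rw [hval]; omega
    have hmod : ((v - 1).val : ℤ) % (2*ℓ+2*s+3) = (v.val : ℤ) % (2*ℓ+2*s+3) - 1 := by
      rw [hcast]; exact emod_sub_one hP rfl hj1
    have hDu : Dfun ℓ s (v - 1) = (v.val : ℤ) % (2*ℓ+2*s+3) - 1 := by
      unfold Dfun; rw [hmod, if_pos (by omega)]
    rw [hDu, hDv]
  · -- ascending side: use the right neighbour v + 1
    have hDv : Dfun ℓ s v = 2*ℓ+2*s+3 - (v.val : ℤ) % (2*ℓ+2*s+3) := by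
      unfold Dfun; rw [if_neg hle]
    refine ⟨v + 1, ring_adj_add_one hn v, ?_⟩
    have hval : (v + 1).val = (v.val + 1) % n := val_add_one hn v
    by_cases htop : v.val + 1 = n
    · have hz : (v + 1).val = 0 := by rw [hval, htop, Nat.mod_self]
      left
      have hDu : Dfun ℓ s (v + 1) = 0 := by
        unfold Dfun
        rw [hz]
        simp only [Nat.cast_zero, Int.zero_emod]
        rw [if_pos (by omega)]
      exact hDu
    · have hlt : v.val + 1 < n := by have := ZMod.val_lt v; omega
      have hval' : (v + 1).val = v.val + 1 := by rw [hval, Nat.mod_eq_of_lt hlt]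
      have hcast : ((v + 1).val : ℤ) = (v.val : ℤ) + 1 := by rw [hval']; omega
      by_cases hj : (v.val : ℤ) % (2*ℓ+2*s+3) = 2*ℓ+2*s+3 - 1
      · left
        have hmod : ((v + 1).val : ℤ) % (2*ℓ+2*s+3) = 0 := by
          rw [hcast]; exact emod_add_one_top hP hj
        unfold Dfun
        rw [hmod, if_pos (by omega)]
      · right
        have hmod : ((v + 1).val : ℤ) % (2*ℓ+2*s+3) = (v.val : ℤ) % (2*ℓ+2*s+3) + 1 := by
          rw [hcast]; exact emod_add_one hP rfl (by omega)
        have hDu : Dfun ℓ s (v + 1) = 2*ℓ+2*s+3 - ((v.val : ℤ) % (2*ℓ+2*s+3) + 1) := by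
          unfold Dfun; rw [hmod, if_neg (by omega)]
        rw [hDu, hDv]
        ring

lemma X_eq_D {ℓ s k : ℤ} (hℓs : 0 ≤ ℓ + s) {n : ℕ} (v : ZMod n)
    (x : ℤ)
    (hx : x = if (v.val : ℤ) % (2*ℓ+2*s+3) = 0 then k - 1
      else if (v.val : ℤ) % (2*ℓ+2*s+3) ≤ ℓ+s+1 then ℓ + 1 - (v.val : ℤ) % (2*ℓ+2*s+3)
      else (v.val : ℤ) % (2*ℓ+2*s+3) - ℓ - 2*s - 2) :
    x = if Dfun ℓ s v = 0 then k - 1 else ℓ + 1 - Dfun ℓ s v := by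
  have h1 : 0 ≤ (v.val : ℤ) % (2*ℓ+2*s+3) := Int.emod_nonneg _ (by omega)
  have h2 : (v.val : ℤ) % (2*ℓ+2*s+3) < 2*ℓ+2*s+3 := Int.emod_lt_of_pos _ (by omega)
  rw [hx]
  unfold Dfun
  split_ifs <;> omega

theorem ring_aux (n k t : ℕ) [NeZero n] (hn : 3 ≤ n) (hk : 2 ≤ k)
    (ℓ s : ℤ) (hs : s = (t : ℤ) - k + 1) (hℓ0 : 0 ≤ ℓ) (hℓk : ℓ ≤ (k : ℤ) - 2)
    (hℓs : 0 ≤ ℓ + s) (X : ZMod n → ℤ)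
    (hXv : ∀ v : ZMod n, X v =
      if (v.val : ℤ) % (2*ℓ+2*s+3) = 0 then (k : ℤ) - 1
      else if (v.val : ℤ) % (2*ℓ+2*s+3) ≤ ℓ+s+1 then ℓ + 1 - (v.val : ℤ) % (2*ℓ+2*s+3)
      else (v.val : ℤ) % (2*ℓ+2*s+3) - ℓ - 2*s - 2) :
    SimpleMonotone (ringGraph n) (1/2) k t (fun v => (X v).toNat) ∧
    ∀ v, (step (ringGraph n) (1/2))^[t] (fun v => (X v).toNat) v = k - 1 := by
  have hk' : (2 : ℤ) ≤ (k : ℤ) := by exact_mod_cast hk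
  have hXD : ∀ v : ZMod n, X v = if Dfun ℓ s v = 0 then (k : ℤ) - 1
      else ℓ + 1 - Dfun ℓ s v := fun v => X_eq_D hℓs v (X v) (hXv v)
  constructor
  · -- simple monotone
    refine ⟨X, ?_, ⟨0, ?_⟩, ?_, ?_⟩
    · intro v
      have hr := Dfun_range hℓs v
      rw [hXD v]
      subst hs
      split_ifs <;> constructor <;> omega
    · rw [hXD 0]
      have h0 : Dfun ℓ s (0 : ZMod n) = 0 := by
        unfold Dfun
        rw [ZMod.val_zero]
        simp only [Nat.cast_zero, Int.zero_emod]
        rw [if_pos (by omega)]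
      rw [h0, if_pos rfl]
    · intro v
      exact Int.toNat_eq_max _
    · intro v hv
      rw [half_deg_ceil hn v]
      have hD0 : Dfun ℓ s v ≠ 0 := by
        intro h
        rw [hXD v, if_pos h] at hv
        exact lt_irrefl _ hv
      obtain ⟨u, hadj, hDu⟩ := Dfun_neighbor hℓs hn v hD0
      have hXlt : X v < X u := by
        have hrv := Dfun_range hℓs v
        have hru := Dfun_range hℓs u
        rw [hXD v, hXD u]
        rcases hDu with h | h <;> split_ifs <;> omega
      haveI : Nonempty {u' | (ringGraph n).Adj v u' ∧ X v < X u'} := ⟨⟨u, hadj, hXlt⟩⟩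
      exact Nat.card_pos
  · -- convergence within t rounds
    have hub : ∀ v : ZMod n, (fun v => (X v).toNat) v ≤ k - 1 := by
      intro v
      have hr := Dfun_range hℓs v
      simp only
      rw [hXD v]
      split_ifs <;> omega
    have hL := lower_bound hn (fun v => (X v).toNat)
      (fun r v => (if Dfun ℓ s v = 0 then (k : ℤ) - 1
        else min ((k : ℤ) - 1) (ℓ + 1 - Dfun ℓ s v + (r : ℤ))).toNat)
      (by
        intro v
        have hr := Dfun_range hℓs v
        rw [hXD v]
        split_ifs <;> push_cast <;> omega)
      (by
        intro r v
        by_cases hD0 : Dfun ℓ s v = 0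
        · left; rw [if_pos hD0, if_pos hD0]
        · obtain ⟨u, hadj, hDu⟩ := Dfun_neighbor hℓs hn v hD0
          refine Or.inr ⟨?_, u, hadj, ?_⟩
          · rw [if_neg hD0, if_neg hD0]; push_cast; omega
          · rcases hDu with h | h
            · rw [if_neg hD0, h, if_pos rfl]; push_cast; omega
            · by_cases h0 : Dfun ℓ s u = 0
              · rw [if_neg hD0, if_pos h0]; push_cast; omega
              · rw [if_neg hD0, if_neg h0, h]; push_cast; omega)
    intro v
    have h1 := hL t v
    have h2 := upper_bound hn (k - 1) (fun v => (X v).toNat) hub t v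
    have hr := Dfun_range hℓs v
    have h3 : (if Dfun ℓ s v = 0 then (k : ℤ) - 1
        else min ((k : ℤ) - 1) (ℓ + 1 - Dfun ℓ s v + (t : ℤ))).toNat = k - 1 := by
      split_ifs <;> omega
    omega

/-- Theorem 4(i): the ring configuration C(R_n,k,t), defined blockwise
modulo 2ℓ+2s+3 (weight k−1 at position 0, descending levels on either side), is
(k,t)-simple-monotone, hence a (k,t)-dynamo under λ = 1/2. -/
theorem stmt12 (n k t : ℕ) [NeZero n] (hn : 3 ≤ n) (hk : 2 ≤ k) (ht : 1 ≤ t) :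
    let s : ℤ := (t : ℤ) - k + 1
    let ℓ : ℤ := if (k : ℤ) - 1 ≤ (t : ℤ)
      then Int.sqrt ((t : ℤ) + 1 + s ^ 2 + s) - (s + 1)
      else Int.sqrt ((t : ℤ) + 1) - (s + 1)
    let X : ZMod n → ℤ := fun v =>
      let j : ℤ := (v.val : ℤ) % (2 * ℓ + 2 * s + 3)
      if j = 0 then (k : ℤ) - 1
      else if j ≤ ℓ + s + 1 then ℓ + 1 - j
      else j - ℓ - 2 * s - 2
    let c : ZMod n → ℕ := fun v => (X v).toNat
    SimpleMonotone (ringGraph n) (1/2) k t c ∧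
    ∀ v, (step (ringGraph n) (1/2))^[t] c v = k - 1 := by
  intro s ℓ X c
  have hk' : (2 : ℤ) ≤ (k : ℤ) := by exact_mod_cast hk
  have ht' : (1 : ℤ) ≤ (t : ℤ) := by exact_mod_cast ht
  have hsdef : s = (t : ℤ) - k + 1 := rfl
  have hℓdef : ℓ = if (k : ℤ) - 1 ≤ (t : ℤ)
      then Int.sqrt ((t : ℤ) + 1 + s ^ 2 + s) - (s + 1)
      else Int.sqrt ((t : ℤ) + 1) - (s + 1) := rfl
  have hB : 0 ≤ ℓ ∧ ℓ ≤ (k : ℤ) - 2 ∧ 0 ≤ ℓ + s := by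
    rw [hℓdef]
    split_ifs with hc
    · have hs0 : 0 ≤ s := by omega
      have hst : s + 1 ≤ (t : ℤ) := by omega
      have h1 : s + 1 ≤ Int.sqrt ((t : ℤ) + 1 + s ^ 2 + s) := by
        apply le_int_sqrt' (by omega)
        nlinarith
      have h2 : Int.sqrt ((t : ℤ) + 1 + s ^ 2 + s) ≤ (t : ℤ) := by
        apply int_sqrt_le' (by nlinarith) (by omega)
        nlinarith [mul_self_le_mul_self hs0 (by omega : s ≤ (t : ℤ) - 1)]
      refine ⟨by omega, by omega, by omega⟩
    · have hs0 : s ≤ -1 := by omega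
      have h1 : (1 : ℤ) ≤ Int.sqrt ((t : ℤ) + 1) := by
        apply le_int_sqrt' (by omega)
        nlinarith
      have h2 : Int.sqrt ((t : ℤ) + 1) ≤ (t : ℤ) := by
        apply int_sqrt_le' (by omega) (by omega)
        nlinarith
      refine ⟨by omega, by omega, by omega⟩
  exact ring_aux n k t hn hk ℓ s hsdef hB.1 hB.2.1 hB.2.2 X (fun v => rfl)
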